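/- arXiv:2407.04176 — 3 statements merged into one kernel-verified Lean document; each statement's English description precedes it below -/
import Mathlib

section
/- Let Ω be a set, 𝔖 a coat of Ω, p' : 𝔖' → [0,1] a quasi-probability measure of 𝔖, and p⋇ the associated exterior quasi-measure. Then every member of 𝔖 is Carathéodory-measurable for p⋇: for every X ∈ 𝔖 and every subset A ⊆ Ω, p⋇(A) = p⋇(A ∩ X) + p⋇(A ∩ (Ω \ X)). -/
open Set

/-- A family of subsets of `Ω` is a *coat* of `Ω` if it contains `∅` and `Ω`. -/
def IsCoat {Ω : Type*} (S : Set (Set Ω)) : Prop := ∅ ∈ S ∧ Set.univ ∈ S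

/-- The *refinement* of `S`: all sets of the form `X ∩ Y` or `X ∩ Yᶜ` with `X, Y ∈ S`. -/
def refinement {Ω : Type*} (S : Set (Set Ω)) : Set (Set Ω) :=
  {T | ∃ X ∈ S, ∃ Y ∈ S, T = X ∩ Y ∨ T = X ∩ Yᶜ}

/-- `p` is a *quasi-probability measure* of the coat `S` (witnesses in `S`). -/
def IsQuasiMeasure {Ω : Type*} (S : Set (Set Ω)) (p : Set Ω → ℝ) : Prop :=
  (∀ T ∈ refinement S, p T ∈ Set.Icc (0 : ℝ) 1) ∧
  p ∅ = 0 ∧ p Set.univ = 1 ∧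
  (∀ X ∈ S, ∀ Y ∈ S, p X = p (X ∩ Y) + p (X ∩ Yᶜ)) ∧
  (∀ X ∈ S, ∀ Y ∈ S, ∃ W ∈ S, X ∩ Y ⊆ W ∧ p (X ∩ Y) = p W) ∧
  (∀ X ∈ S, ∀ Y ∈ S, ∃ Z ∈ S, X ∩ Yᶜ ⊆ Z ∧ p (X ∩ Yᶜ) = p Z) ∧
  (∀ X ∈ S, ∀ (m : ℕ) (T : Fin m → Set Ω), (∀ n, T n ∈ S) →
      X ⊆ ⋃ n, T n → p X ≤ ∑ n, p (T n))

/-- The *exterior quasi-measure* associated with `p` and the coat `S`. -/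
noncomputable def outerQM {Ω : Type*} (S : Set (Set Ω)) (p : Set Ω → ℝ) (A : Set Ω) : ℝ :=
  sInf {r | ∃ (m : ℕ) (T : Fin m → Set Ω),
    (∀ n, T n ∈ S) ∧ A ⊆ (⋃ n, T n) ∧ r = ∑ n, p (T n)}

-- aux
def coverSums {Ω : Type*} (S : Set (Set Ω)) (p : Set Ω → ℝ) (A : Set Ω) : Set ℝ :=
  {r | ∃ (m : ℕ) (T : Fin m → Set Ω),
    (∀ n, T n ∈ S) ∧ A ⊆ (⋃ n, T n) ∧ r = ∑ n, p (T n)}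

lemma outerQM_eq {Ω : Type*} (S : Set (Set Ω)) (p : Set Ω → ℝ) (A : Set Ω) :
    outerQM S p A = sInf (coverSums S p A) := rfl

lemma p_nonneg {Ω : Type*} {S : Set (Set Ω)} {p : Set Ω → ℝ}
    (hS : IsCoat S) (hp : IsQuasiMeasure S p) {X : Set Ω} (hX : X ∈ S) : 0 ≤ p X := by
  have : X ∈ refinement S := ⟨X, hX, univ, hS.2, Or.inl (by simp)⟩
  exact (hp.1 X this).1

lemma coverSums_nonempty {Ω : Type*} (S : Set (Set Ω)) (p : Set Ω → ℝ)
    (hS : IsCoat S) (A : Set Ω) : (coverSums S p A).Nonempty :=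
  ⟨∑ n : Fin 1, p ((fun _ => (univ : Set Ω)) n), 1, fun _ => univ,
    fun _ => hS.2, fun x _ => mem_iUnion.2 ⟨0, trivial⟩, rfl⟩

lemma coverSums_bddBelow {Ω : Type*} (S : Set (Set Ω)) (p : Set Ω → ℝ)
    (hS : IsCoat S) (hp : IsQuasiMeasure S p) (A : Set Ω) : BddBelow (coverSums S p A) := by
  refine ⟨0, ?_⟩
  rintro r ⟨m, T, hT, -, rfl⟩
  exact Finset.sum_nonneg fun n _ => p_nonneg hS hp (hT n)


/-- every member of the coat `𝔖` is Carathéodory-measurable for `p⋇`. -/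
theorem coat_caratheodoryMeasurable {Ω : Type*} (S : Set (Set Ω)) (p : Set Ω → ℝ)
    (hS : IsCoat S) (hp : IsQuasiMeasure S p) :
    ∀ X ∈ S, ∀ A : Set Ω,
      outerQM S p A = outerQM S p (A ∩ X) + outerQM S p (A ∩ Xᶜ) := by
  intro X hX A
  obtain ⟨hIcc, hpe, hpu, hadd, hWex, hZex, hsub⟩ := hp
  have hp' : IsQuasiMeasure S p := ⟨hIcc, hpe, hpu, hadd, hWex, hZex, hsub⟩
  rw [outerQM_eq, outerQM_eq, outerQM_eq]
  apply le_antisymm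
  · -- subadditivity
    have key : ∀ r1 ∈ coverSums S p (A ∩ X), ∀ r2 ∈ coverSums S p (A ∩ Xᶜ),
        sInf (coverSums S p A) ≤ r1 + r2 := by
      rintro r1 ⟨m1, T1, hT1, hc1, rfl⟩ r2 ⟨m2, T2, hT2, hc2, rfl⟩
      apply csInf_le (coverSums_bddBelow S p hS hp' A)
      refine ⟨m1 + m2, Fin.append T1 T2, ?_, ?_, ?_⟩
      · intro n
        refine Fin.addCases (fun i => ?_) (fun i => ?_) n
        · simpa [Fin.append_left] using hT1 i
        · simpa [Fin.append_right] using hT2 i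
      · intro x hx
        by_cases hxX : x ∈ X
        · obtain ⟨_, ⟨i, rfl⟩, hi⟩ := hc1 ⟨hx, hxX⟩
          exact mem_iUnion.2 ⟨Fin.castAdd m2 i, by simpa [Fin.append_left] using hi⟩
        · obtain ⟨_, ⟨i, rfl⟩, hi⟩ := hc2 ⟨hx, hxX⟩
          exact mem_iUnion.2 ⟨Fin.natAdd m1 i, by simpa [Fin.append_right] using hi⟩
      · rw [Fin.sum_univ_add]
        simp [Fin.append_left, Fin.append_right]
    have h2 : ∀ r1 ∈ coverSums S p (A ∩ X),
        sInf (coverSums S p A) - r1 ≤ sInf (coverSums S p (A ∩ Xᶜ)) := by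
      intro r1 hr1
      apply le_csInf (coverSums_nonempty S p hS _)
      intro r2 hr2
      linarith [key r1 hr1 r2 hr2]
    have h3 : sInf (coverSums S p A) - sInf (coverSums S p (A ∩ Xᶜ)) ≤
        sInf (coverSums S p (A ∩ X)) := by
      apply le_csInf (coverSums_nonempty S p hS _)
      intro r1 hr1
      linarith [h2 r1 hr1]
    linarith
  · apply le_csInf (coverSums_nonempty S p hS _)
    rintro r ⟨m, T, hT, hc, rfl⟩
    choose W hWS hWsub hWp using fun n => hWex (T n) (hT n) X hX
    choose Z hZS hZsub hZp using fun n => hZex (T n) (hT n) X hX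
    have h1 : sInf (coverSums S p (A ∩ X)) ≤ ∑ n, p (T n ∩ X) := by
      have : (∑ n, p (W n)) ∈ coverSums S p (A ∩ X) := by
        refine ⟨m, W, hWS, ?_, rfl⟩
        intro x hx
        obtain ⟨_, ⟨i, rfl⟩, hi⟩ := hc hx.1
        exact mem_iUnion.2 ⟨i, hWsub i ⟨hi, hx.2⟩⟩
      calc sInf (coverSums S p (A ∩ X)) ≤ ∑ n, p (W n) :=
            csInf_le (coverSums_bddBelow S p hS hp' _) this
        _ = ∑ n, p (T n ∩ X) := by simp [hWp]
    have h2 : sInf (coverSums S p (A ∩ Xᶜ)) ≤ ∑ n, p (T n ∩ Xᶜ) := by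
      have : (∑ n, p (Z n)) ∈ coverSums S p (A ∩ Xᶜ) := by
        refine ⟨m, Z, hZS, ?_, rfl⟩
        intro x hx
        obtain ⟨_, ⟨i, rfl⟩, hi⟩ := hc hx.1
        exact mem_iUnion.2 ⟨i, hZsub i ⟨hi, hx.2⟩⟩
      calc sInf (coverSums S p (A ∩ Xᶜ)) ≤ ∑ n, p (Z n) :=
            csInf_le (coverSums_bddBelow S p hS hp' _) this
        _ = ∑ n, p (T n ∩ Xᶜ) := by simp [hZp]
    have : ∑ n, p (T n) = ∑ n, p (T n ∩ X) + ∑ n, p (T n ∩ Xᶜ) := by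
      rw [← Finset.sum_add_distrib]
      exact Finset.sum_congr rfl fun n _ => hadd (T n) (hT n) X hX
    linarith
end

section
/- Let Ω be a set, 𝔖 a coat of Ω, p' : 𝔖' → [0,1] a quasi-probability measure of 𝔖, and p⋇ the associated exterior quasi-measure. Then every set in the algebra 𝒜(𝔖) generated by 𝔖 is Carathéodory-measurable for p⋇: for every E ∈ 𝒜(𝔖) and every subset A ⊆ Ω, p⋇(A) = p⋇(A ∩ E) + p⋇(A ∩ (Ω \ E)). -/
open Set

/-- The algebra of subsets of `Ω` generated by `S`: the smallest family containing `S`,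
`∅` and `univ`, closed under complements and finite unions. -/
def genAlgebra {Ω : Type*} (S : Set (Set Ω)) : Set (Set Ω) :=
  ⋂₀ {A | S ⊆ A ∧ ∅ ∈ A ∧ Set.univ ∈ A ∧ (∀ W ∈ A, Wᶜ ∈ A) ∧
      ∀ W ∈ A, ∀ Z ∈ A, W ∪ Z ∈ A}

/-!
Covers by members of `𝔖` make `p⋇` finitely subadditive, so only `p⋇(A ∩ E) + p⋇(A ∩ Eᶜ) ≤ p⋇(A)`
needs proof. For `E ∈ 𝔖` this follows by splitting every cover `T` of `A` into the pieces
`T n ∩ E` and `T n ∩ Eᶜ`: axiom (ii) preserves the total mass, and axioms (iii)/(iv) replace each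
piece by a member of `𝔖` of the same mass, giving covers of `A ∩ E` and `A ∩ Eᶜ`. The
Carathéodory sets are closed under complements and unions, hence contain `𝒜(𝔖)`.
-/

section

variable {Ω : Type*} {S : Set (Set Ω)} {p : Set Ω → ℝ}

lemma IsQuasiMeasure.nonneg (hp : IsQuasiMeasure S p) {X : Set Ω} (hX : X ∈ S) : 0 ≤ p X :=
  (hp.1 X ⟨X, hX, X, hX, Or.inl (inter_self X).symm⟩).1

lemma outerQM_le_sum (hp : IsQuasiMeasure S p) {A : Set Ω} {m : ℕ} {T : Fin m → Set Ω}
    (hT : ∀ n, T n ∈ S) (hA : A ⊆ ⋃ n, T n) : outerQM S p A ≤ ∑ n, p (T n) := by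
  refine csInf_le ⟨0, ?_⟩ ⟨m, T, hT, hA, rfl⟩
  rintro r ⟨k, U, hU, -, rfl⟩
  exact Finset.sum_nonneg fun n _ => hp.nonneg (hU n)

lemma le_outerQM (hS : IsCoat S) {A : Set Ω} {r : ℝ}
    (h : ∀ (m : ℕ) (T : Fin m → Set Ω), (∀ n, T n ∈ S) → A ⊆ ⋃ n, T n → r ≤ ∑ n, p (T n)) :
    r ≤ outerQM S p A := by
  have hcover : A ⊆ ⋃ _ : Fin 1, univ := fun _ _ => mem_iUnion.2 ⟨0, trivial⟩
  refine le_csInf ⟨_, 1, fun _ => univ, fun _ => hS.2, hcover, rfl⟩ ?_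
  rintro _ ⟨m, T, hT, hA, rfl⟩
  exact h m T hT hA

lemma outerQM_union_le_sum_add_sum (hp : IsQuasiMeasure S p) {A B : Set Ω} {m k : ℕ}
    {T : Fin m → Set Ω} {U : Fin k → Set Ω} (hT : ∀ n, T n ∈ S) (hU : ∀ n, U n ∈ S)
    (hA : A ⊆ ⋃ n, T n) (hB : B ⊆ ⋃ n, U n) :
    outerQM S p (A ∪ B) ≤ ∑ n, p (T n) + ∑ n, p (U n) := by
  have hTU : ∀ n, Fin.append T U n ∈ S := Fin.addCases (by simpa using hT) (by simpa using hU)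
  have hcover : A ∪ B ⊆ ⋃ n, Fin.append T U n := by
    rintro x (hx | hx)
    · obtain ⟨n, hn⟩ := mem_iUnion.1 (hA hx)
      exact mem_iUnion.2 ⟨Fin.castAdd k n, by simpa using hn⟩
    · obtain ⟨n, hn⟩ := mem_iUnion.1 (hB hx)
      exact mem_iUnion.2 ⟨Fin.natAdd m n, by simpa using hn⟩
  simpa [Fin.sum_univ_add] using outerQM_le_sum hp hTU hcover

lemma outerQM_union_le (hS : IsCoat S) (hp : IsQuasiMeasure S p) (A B : Set Ω) :
    outerQM S p (A ∪ B) ≤ outerQM S p A + outerQM S p B := by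
  rw [← sub_le_iff_le_add]
  refine le_outerQM hS fun m T hT hA => ?_
  rw [sub_le_comm]
  refine le_outerQM hS fun k U hU hB => ?_
  rw [sub_le_iff_le_add']
  exact outerQM_union_le_sum_add_sum hp hT hU hA hB

lemma outerQM_inter_le_sum (hp : IsQuasiMeasure S p) {A Y : Set Ω} {m : ℕ}
    {T : Fin m → Set Ω} (hA : A ⊆ ⋃ n, T n)
    (hY : ∀ n, ∃ W ∈ S, T n ∩ Y ⊆ W ∧ p (T n ∩ Y) = p W) :
    outerQM S p (A ∩ Y) ≤ ∑ n, p (T n ∩ Y) := by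
  choose W hWS hWsub hWp using hY
  have hcover : A ∩ Y ⊆ ⋃ n, W n := by
    rintro x ⟨hxA, hxY⟩
    obtain ⟨n, hn⟩ := mem_iUnion.1 (hA hxA)
    exact mem_iUnion.2 ⟨n, hWsub n ⟨hn, hxY⟩⟩
  simpa only [hWp] using outerQM_le_sum hp hWS hcover

def IsCaratheodory (S : Set (Set Ω)) (p : Set Ω → ℝ) (E : Set Ω) : Prop :=
  ∀ A : Set Ω, outerQM S p A = outerQM S p (A ∩ E) + outerQM S p (A ∩ Eᶜ)

lemma isCaratheodory_of_le (hS : IsCoat S) (hp : IsQuasiMeasure S p) {E : Set Ω}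
    (h : ∀ A : Set Ω, outerQM S p (A ∩ E) + outerQM S p (A ∩ Eᶜ) ≤ outerQM S p A) :
    IsCaratheodory S p E := fun A =>
  le_antisymm (by simpa only [inter_union_compl] using outerQM_union_le hS hp (A ∩ E) (A ∩ Eᶜ))
    (h A)

lemma isCaratheodory_of_mem (hS : IsCoat S) (hp : IsQuasiMeasure S p) {E : Set Ω}
    (hE : E ∈ S) : IsCaratheodory S p E := by
  refine isCaratheodory_of_le hS hp fun A => le_outerQM hS fun m T hT hA => ?_
  calc outerQM S p (A ∩ E) + outerQM S p (A ∩ Eᶜ)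
      ≤ ∑ n, p (T n ∩ E) + ∑ n, p (T n ∩ Eᶜ) :=
        add_le_add (outerQM_inter_le_sum hp hA fun n => hp.2.2.2.2.1 (T n) (hT n) E hE)
          (outerQM_inter_le_sum hp hA fun n => hp.2.2.2.2.2.1 (T n) (hT n) E hE)
    _ = ∑ n, p (T n) := by
        rw [← Finset.sum_add_distrib]
        exact Finset.sum_congr rfl fun n _ => (hp.2.2.2.1 (T n) (hT n) E hE).symm

lemma IsCaratheodory.compl {E : Set Ω} (hE : IsCaratheodory S p E) :
    IsCaratheodory S p Eᶜ := fun A => by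
  rw [compl_compl, add_comm]
  exact hE A

lemma IsCaratheodory.union {E F : Set Ω} (hE : IsCaratheodory S p E)
    (hF : IsCaratheodory S p F) : IsCaratheodory S p (E ∪ F) := fun A => by
  have hE_part : A ∩ (E ∪ F) ∩ E = A ∩ E := by
    ext x; simp only [mem_inter_iff, mem_union]; tauto
  have hEc_part : A ∩ (E ∪ F) ∩ Eᶜ = A ∩ Eᶜ ∩ F := by
    ext x; simp only [mem_inter_iff, mem_union, mem_compl_iff]; tauto
  have hEFc : A ∩ Eᶜ ∩ Fᶜ = A ∩ (E ∪ F)ᶜ := by rw [compl_union, inter_assoc]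
  calc outerQM S p A = outerQM S p (A ∩ E) + outerQM S p (A ∩ Eᶜ) := hE A
    _ = outerQM S p (A ∩ E) + (outerQM S p (A ∩ Eᶜ ∩ F) + outerQM S p (A ∩ Eᶜ ∩ Fᶜ)) := by
        rw [← hF]
    _ = outerQM S p (A ∩ (E ∪ F)) + outerQM S p (A ∩ (E ∪ F)ᶜ) := by
        rw [hE (A ∩ (E ∪ F)), hE_part, hEc_part, hEFc, add_assoc]

lemma genAlgebra_subset {F : Set (Set Ω)} (hSF : S ⊆ F) (hempty : ∅ ∈ F) (huniv : univ ∈ F)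
    (hcompl : ∀ W ∈ F, Wᶜ ∈ F) (hunion : ∀ W ∈ F, ∀ Z ∈ F, W ∪ Z ∈ F) :
    genAlgebra S ⊆ F :=
  sInter_subset_of_mem ⟨hSF, hempty, huniv, hcompl, hunion⟩

end

/-- every set in the algebra generated by `𝔖` is Carathéodory-measurable
for the exterior quasi-measure. -/
theorem genAlgebra_caratheodoryMeasurable {Ω : Type*} (S : Set (Set Ω)) (p : Set Ω → ℝ)
    (hS : IsCoat S) (hp : IsQuasiMeasure S p) :
    ∀ E ∈ genAlgebra S, ∀ A : Set Ω,
      outerQM S p A = outerQM S p (A ∩ E) + outerQM S p (A ∩ Eᶜ) := fun _ hE =>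
  genAlgebra_subset (F := {E | IsCaratheodory S p E}) (fun _ => isCaratheodory_of_mem hS hp)
    (isCaratheodory_of_mem hS hp hS.1) (isCaratheodory_of_mem hS hp hS.2)
    (fun _ => IsCaratheodory.compl) (fun _ hW _ hZ => hW.union hZ) hE
end

section
/- Let Ω be a set, 𝔖 a coat of Ω, p' : 𝔖' → [0,1] a quasi-probability measure of 𝔖, and p⋇ the associated exterior quasi-measure. Then the restriction of p⋇ to the algebra 𝒜(𝔖) generated by 𝔖 is a probability pre-measure: p⋇(∅) = 0, p⋇(Ω) = 1, 0 ≤ p⋇(E) ≤ 1 for every E ∈ 𝒜(𝔖), and for every finite, pairwise disjoint collection E_1, …, E_n ∈ 𝒜(𝔖) one has p⋇(⋃_{i=1}^n E_i) = Σ_{i=1}^n p⋇(E_i). -/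
open Set

namespace QMAux

variable {Ω : Type*} (S : Set (Set Ω)) (p : Set Ω → ℝ)

def coverSet (A : Set Ω) : Set ℝ :=
  {r | ∃ (m : ℕ) (T : Fin m → Set Ω),
    (∀ n, T n ∈ S) ∧ A ⊆ (⋃ n, T n) ∧ r = ∑ n, p (T n)}

lemma outerQM_eq (A : Set Ω) : outerQM S p A = sInf (coverSet S p A) := rfl

variable (hS : IsCoat S) (hp : IsQuasiMeasure S p)
include hS hp

lemma p_nonneg : ∀ X ∈ S, 0 ≤ p X := by
  intro X hX
  have : X ∈ refinement S := ⟨X, hX, Set.univ, hS.2, Or.inl (by simp)⟩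
  exact (hp.1 _ this).1

lemma one_mem_coverSet (A : Set Ω) : 1 ∈ coverSet S p A := by
  refine ⟨1, fun _ => Set.univ, fun _ => hS.2, fun x _ => mem_iUnion.mpr ⟨0, mem_univ x⟩, ?_⟩
  simp [hp.2.2.1]

lemma coverSet_nonempty (A : Set Ω) : (coverSet S p A).Nonempty :=
  ⟨1, one_mem_coverSet S p hS hp A⟩

lemma coverSet_bddBelow (A : Set Ω) : BddBelow (coverSet S p A) := by
  refine ⟨0, fun r hr => ?_⟩
  obtain ⟨m, T, hT, -, rfl⟩ := hr
  exact Finset.sum_nonneg fun n _ => p_nonneg S p hS hp _ (hT n)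

lemma outerQM_nonneg (A : Set Ω) : 0 ≤ outerQM S p A := by
  apply Real.sInf_nonneg
  rintro r ⟨m, T, hT, -, rfl⟩
  exact Finset.sum_nonneg fun n _ => p_nonneg S p hS hp _ (hT n)

lemma outerQM_le_of_mem {A : Set Ω} {r : ℝ} (hr : r ∈ coverSet S p A) :
    outerQM S p A ≤ r :=
  csInf_le (coverSet_bddBelow S p hS hp A) hr

lemma outerQM_le_one (A : Set Ω) : outerQM S p A ≤ 1 :=
  outerQM_le_of_mem S p hS hp (one_mem_coverSet S p hS hp A)

lemma outerQM_empty : outerQM S p ∅ = 0 := by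
  have h0 : (0:ℝ) ∈ coverSet S p ∅ :=
    ⟨0, Fin.elim0, fun n => n.elim0, by simp, by simp⟩
  exact le_antisymm (outerQM_le_of_mem S p hS hp h0) (outerQM_nonneg S p hS hp ∅)

lemma outerQM_mem_of_mem {X : Set Ω} (hX : X ∈ S) : outerQM S p X = p X := by
  refine le_antisymm ?_ ?_
  · refine outerQM_le_of_mem S p hS hp ⟨1, fun _ => X, fun _ => hX, Set.subset_iUnion (fun _ : Fin 1 => X) 0, by simp⟩
  · apply le_csInf (coverSet_nonempty S p hS hp X)
    rintro r ⟨m, T, hT, hcov, rfl⟩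
    exact hp.2.2.2.2.2.2 X hX m T hT hcov

lemma outerQM_univ : outerQM S p Set.univ = 1 := by
  rw [outerQM_mem_of_mem S p hS hp hS.2, hp.2.2.1]

lemma outerQM_mono {A B : Set Ω} (h : A ⊆ B) : outerQM S p A ≤ outerQM S p B := by
  apply csInf_le_csInf (coverSet_bddBelow S p hS hp A) (coverSet_nonempty S p hS hp B)
  rintro r ⟨m, T, hT, hcov, rfl⟩
  exact ⟨m, T, hT, h.trans hcov, rfl⟩

omit hS hp in
lemma add_mem_coverSet {A B : Set Ω} {a b : ℝ}
    (ha : a ∈ coverSet S p A) (hb : b ∈ coverSet S p B) :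
    a + b ∈ coverSet S p (A ∪ B) := by
  obtain ⟨m, T, hT, hcovT, rfl⟩ := ha
  obtain ⟨k, U, hU, hcovU, rfl⟩ := hb
  refine ⟨m + k, Fin.append T U, ?_, ?_, ?_⟩
  · intro n
    refine Fin.addCases (fun i => ?_) (fun i => ?_) n
    · rw [Fin.append_left]; exact hT i
    · rw [Fin.append_right]; exact hU i
  · intro x hx
    rcases hx with hx | hx
    · obtain ⟨i, hi⟩ := mem_iUnion.mp (hcovT hx)
      exact mem_iUnion.mpr ⟨Fin.castAdd k i, by rwa [Fin.append_left]⟩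
    · obtain ⟨i, hi⟩ := mem_iUnion.mp (hcovU hx)
      exact mem_iUnion.mpr ⟨Fin.natAdd m i, by rwa [Fin.append_right]⟩
  · rw [Fin.sum_univ_add]
    simp [Fin.append_left, Fin.append_right]

lemma outerQM_union_le (A B : Set Ω) :
    outerQM S p (A ∪ B) ≤ outerQM S p A + outerQM S p B := by
  have key : ∀ a ∈ coverSet S p A, ∀ b ∈ coverSet S p B,
      outerQM S p (A ∪ B) ≤ a + b := fun a ha b hb =>
    outerQM_le_of_mem S p hS hp (add_mem_coverSet S p ha hb)
  have h1 : ∀ b ∈ coverSet S p B, outerQM S p (A ∪ B) ≤ outerQM S p A + b := by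
    intro b hb
    rw [← sub_le_iff_le_add]
    apply le_csInf (coverSet_nonempty S p hS hp A)
    intro a ha
    rw [sub_le_iff_le_add]
    exact key a ha b hb
  rw [← sub_le_iff_le_add']
  apply le_csInf (coverSet_nonempty S p hS hp B)
  intro b hb
  rw [sub_le_iff_le_add']
  exact h1 b hb

lemma caratheodory_of_mem {E : Set Ω} (hE : E ∈ S) (A : Set Ω) :
    outerQM S p (A ∩ E) + outerQM S p (A ∩ Eᶜ) ≤ outerQM S p A := by
  apply le_csInf (coverSet_nonempty S p hS hp A)
  rintro r ⟨m, T, hT, hcov, rfl⟩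
  choose W hWS hWsub hWp using fun n => hp.2.2.2.2.1 (T n) (hT n) E hE
  choose Z hZS hZsub hZp using fun n => hp.2.2.2.2.2.1 (T n) (hT n) E hE
  have h1 : outerQM S p (A ∩ E) ≤ ∑ n, p (W n) := by
    refine outerQM_le_of_mem S p hS hp ⟨m, W, hWS, ?_, rfl⟩
    rintro x ⟨hxA, hxE⟩
    obtain ⟨i, hi⟩ := mem_iUnion.mp (hcov hxA)
    exact mem_iUnion.mpr ⟨i, hWsub i ⟨hi, hxE⟩⟩
  have h2 : outerQM S p (A ∩ Eᶜ) ≤ ∑ n, p (Z n) := by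
    refine outerQM_le_of_mem S p hS hp ⟨m, Z, hZS, ?_, rfl⟩
    rintro x ⟨hxA, hxE⟩
    obtain ⟨i, hi⟩ := mem_iUnion.mp (hcov hxA)
    exact mem_iUnion.mpr ⟨i, hZsub i ⟨hi, hxE⟩⟩
  have hsum : ∑ n, p (T n) = ∑ n, p (W n) + ∑ n, p (Z n) := by
    rw [← Finset.sum_add_distrib]
    exact Finset.sum_congr rfl fun n _ => by
      rw [hp.2.2.2.1 (T n) (hT n) E hE, hWp n, hZp n]
  linarith

end QMAux

namespace QMAux

def carSet {Ω : Type*} (S : Set (Set Ω)) (p : Set Ω → ℝ) : Set (Set Ω) :=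
  {E | ∀ A : Set Ω, outerQM S p A = outerQM S p (A ∩ E) + outerQM S p (A ∩ Eᶜ)}

variable {Ω : Type*} (S : Set (Set Ω)) (p : Set Ω → ℝ)
variable (hS : IsCoat S) (hp : IsQuasiMeasure S p)
include hS hp

lemma le_car (A E : Set Ω) :
    outerQM S p A ≤ outerQM S p (A ∩ E) + outerQM S p (A ∩ Eᶜ) := by
  have : A = (A ∩ E) ∪ (A ∩ Eᶜ) := by
    rw [← Set.inter_union_distrib_left, Set.union_compl_self, Set.inter_univ]
  calc outerQM S p A = outerQM S p ((A ∩ E) ∪ (A ∩ Eᶜ)) := by rw [← this]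
    _ ≤ _ := outerQM_union_le S p hS hp _ _

lemma S_subset_carSet : S ⊆ carSet S p := by
  intro E hE A
  exact le_antisymm (le_car S p hS hp A E) (caratheodory_of_mem S p hS hp hE A)

lemma empty_mem_carSet : ∅ ∈ carSet S p := by
  intro A
  rw [Set.inter_empty, Set.compl_empty, Set.inter_univ,
    outerQM_empty S p hS hp, zero_add]

omit hS hp in
lemma compl_mem_carSet {E : Set Ω} (hE : E ∈ carSet S p) : Eᶜ ∈ carSet S p := by
  intro A
  rw [compl_compl, add_comm]
  exact hE A

lemma univ_mem_carSet : Set.univ ∈ carSet S p := by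
  intro A
  rw [Set.inter_univ, Set.compl_univ, Set.inter_empty,
    outerQM_empty S p hS hp, add_zero]

lemma union_mem_carSet {E F : Set Ω} (hE : E ∈ carSet S p) (hF : F ∈ carSet S p) :
    E ∪ F ∈ carSet S p := by
  intro A
  refine le_antisymm (le_car S p hS hp A _) ?_
  have e1 : A ∩ Eᶜ ∩ Fᶜ = A ∩ (E ∪ F)ᶜ := by
    rw [Set.compl_union, Set.inter_assoc]
  have e2 : A ∩ (E ∪ F) = (A ∩ E) ∪ (A ∩ Eᶜ ∩ F) := by
    ext x
    simp only [Set.mem_inter_iff, Set.mem_union, Set.mem_compl_iff]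
    tauto
  have h3 : outerQM S p (A ∩ (E ∪ F)) ≤
      outerQM S p (A ∩ E) + outerQM S p (A ∩ Eᶜ ∩ F) := by
    rw [e2]; exact outerQM_union_le S p hS hp _ _
  have h4 := hE A
  have h5 := hF (A ∩ Eᶜ)
  rw [e1] at h5
  linarith

lemma genAlgebra_subset_carSet : genAlgebra S ⊆ carSet S p := by
  intro E hE
  exact hE (carSet S p) ⟨S_subset_carSet S p hS hp, empty_mem_carSet S p hS hp,
    univ_mem_carSet S p hS hp, fun W hW => compl_mem_carSet S p hW,
    fun W hW Z hZ => union_mem_carSet S p hS hp hW hZ⟩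

omit hS hp in
lemma outerQM_union_disjoint {E F : Set Ω} (hE : E ∈ carSet S p)
    (hEF : Disjoint E F) :
    outerQM S p (E ∪ F) = outerQM S p E + outerQM S p F := by
  have h := hE (E ∪ F)
  have e1 : (E ∪ F) ∩ E = E := Set.union_inter_cancel_left
  have e2 : (E ∪ F) ∩ Eᶜ = F := by
    rw [Set.union_inter_distrib_right, Set.inter_compl_self, Set.empty_union]
    exact Set.inter_eq_left.mpr (Set.subset_compl_iff_disjoint_left.mpr hEF)
  rw [e1, e2] at h
  exact h

end QMAux

/-- the restriction of the exterior quasi-measure to the algebra generated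
by `𝔖` is a probability pre-measure. -/
theorem outerQM_isPreMeasure_on_genAlgebra {Ω : Type*} (S : Set (Set Ω)) (p : Set Ω → ℝ)
    (hS : IsCoat S) (hp : IsQuasiMeasure S p) :
    outerQM S p ∅ = 0 ∧ outerQM S p Set.univ = 1 ∧
    (∀ E ∈ genAlgebra S, outerQM S p E ∈ Set.Icc (0 : ℝ) 1) ∧
    ∀ (n : ℕ) (E : Fin n → Set Ω), (∀ i, E i ∈ genAlgebra S) →
      (∀ i j, i ≠ j → Disjoint (E i) (E j)) →
      outerQM S p (⋃ i, E i) = ∑ i, outerQM S p (E i) := by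
  refine ⟨QMAux.outerQM_empty S p hS hp, QMAux.outerQM_univ S p hS hp, ?_, ?_⟩
  · intro E _
    exact ⟨QMAux.outerQM_nonneg S p hS hp E, QMAux.outerQM_le_one S p hS hp E⟩
  · intro n
    induction n with
    | zero =>
      intro E _ _
      rw [show (⋃ i : Fin 0, E i) = ∅ by simp, QMAux.outerQM_empty S p hS hp]
      simp
    | succ k ih =>
      intro E hEmem hdisj
      have hu : (⋃ i, E i) = E 0 ∪ ⋃ i : Fin k, E i.succ := by
        ext x
        simp only [mem_iUnion, mem_union]
        exact Fin.exists_fin_succ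
      have hd : Disjoint (E 0) (⋃ i : Fin k, E i.succ) :=
        Set.disjoint_iUnion_right.mpr fun i => hdisj 0 i.succ (Fin.succ_ne_zero i).symm
      rw [hu, QMAux.outerQM_union_disjoint S p
          (QMAux.genAlgebra_subset_carSet S p hS hp (hEmem 0)) hd,
        ih (fun i => E i.succ) (fun i => hEmem i.succ)
          (fun i j hij => hdisj i.succ j.succ (fun h => hij (Fin.succ_injective k h))),
        Fin.sum_univ_succ]
end
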